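/- If g is an orientation-preserving PL homeomorphism of [0,1] with g(x) > x on (0,1), g′(0)=2, g′(1)=1/2, and g₁ is any orientation-preserving PL homeomorphism of [0,1], then the set of monitored informations of g₁ g g₁⁻¹ equals the set of monitored informations of g: 𝓘(g₁ g g₁⁻¹) = 𝓘(g). -/

import Mathlib

open Set

/-- An orientation-preserving piecewise linear homeomorphism of `[0,1]`,
viewed as a map of `ℝ` extended by the identity outside `[0,1]`. -/
def IsPLHomeo (f : ℝ → ℝ) : Prop :=
  Function.Bijective f ∧ StrictMono f ∧ f 0 = 0 ∧ f 1 = 1 ∧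
  (∀ x, x ∉ Icc (0 : ℝ) 1 → f x = x) ∧
  ∃ n : ℕ, ∃ x : Fin (n + 1) → ℝ, StrictMono x ∧ x 0 = 0 ∧ x (Fin.last n) = 1 ∧
    ∀ i : Fin n, ∃ c d : ℝ, ∀ t ∈ Icc (x i.castSucc) (x i.succ), f t = c * t + d

/-- `g` is linear of slope `c` near `0`. -/
def Slope0 (f : ℝ → ℝ) (c : ℝ) : Prop :=
  ∃ ε > (0 : ℝ), ∀ t ∈ Icc (0 : ℝ) ε, f t = c * t

/-- `g` is linear of slope `c` near `1`. -/
def Slope1 (f : ℝ → ℝ) (c : ℝ) : Prop :=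
  ∃ ε > (0 : ℝ), ∀ t ∈ Icc (1 - ε) (1 : ℝ), f t = c * (t - 1) + 1

/-- The intervals `I = [a, 2a]` and `J = [1-2b, 1-b]` are monitoring intervals for `g`
(with exponent `N`), with monitored information `f = φ_J⁻¹ ∘ g^N ∘ φ_I`, where
`φ_K : [0,1] → K` denotes the orientation-preserving affine bijection.  Here
`φ_I(t) = a + a·t` and `φ_J(t) = (1 - 2b) + b·t`.  `I` is required to lie in an end
linear zone of `g` at `0` (where `g` has slope `2`) and `J` in an end linear zone of
`g` at `1` (where `g` has slope `1/2`), and `g^N` maps `I` onto `J`. -/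
def Monitors (g : ℝ → ℝ) (a b : ℝ) (N : ℕ) (f : ℝ → ℝ) : Prop :=
  0 < a ∧ 0 < b ∧ 0 < N ∧
  (∀ t ∈ Icc (0 : ℝ) (2 * a), g t = 2 * t) ∧
  (∀ t ∈ Icc (1 - 2 * b) (1 : ℝ), g t = (t - 1) / 2 + 1) ∧
  g^[N] a = 1 - 2 * b ∧ g^[N] (2 * a) = 1 - b ∧
  ∀ t ∈ Icc (0 : ℝ) 1, g^[N] (a + a * t) = (1 - 2 * b) + b * f t

/-! ### Auxiliary lemmas -/

/-- Iterates of a conjugate permutation. -/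
lemma perm_conj_iterate (g₁ g : Equiv.Perm ℝ) (N : ℕ) (x : ℝ) :
    (⇑(g₁ * g * g₁⁻¹))^[N] x = g₁ ((⇑g)^[N] (g₁⁻¹ x)) := by
  rw [Equiv.Perm.iterate_eq_pow, Equiv.Perm.iterate_eq_pow, conj_pow]
  simp [Equiv.Perm.mul_apply]

/-- The inverse of a strictly monotone permutation is strictly monotone. -/
lemma perm_symm_strictMono (e : Equiv.Perm ℝ) (h : StrictMono ⇑e) :
    StrictMono ⇑e⁻¹ := by
  intro x y hxy
  have hiff := h.lt_iff_lt (a := e⁻¹ x) (b := e⁻¹ y)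
  simp only [show ∀ z, e (e⁻¹ z) = z from e.apply_symm_apply] at hiff
  exact hiff.mp hxy

/-- The monitored information takes values in `[0,1]`. -/
lemma monitors_range {g : ℝ → ℝ} (hm : StrictMono g) {a b : ℝ} {N : ℕ} {f : ℝ → ℝ}
    (h : Monitors g a b N f) : ∀ t ∈ Icc (0 : ℝ) 1, 0 ≤ f t ∧ f t ≤ 1 := by
  obtain ⟨ha, hb, hN, hlin0, hlin1, hIa, hIb, hf⟩ := h
  intro t ht
  have hmono := hm.iterate N
  have h1 : g^[N] a ≤ g^[N] (a + a * t) := by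
    apply hmono.monotone; nlinarith [ht.1]
  have h2 : g^[N] (a + a * t) ≤ g^[N] (2 * a) := by
    apply hmono.monotone; nlinarith [ht.2]
  rw [hIa, hf t ht] at h1
  rw [hIb, hf t ht] at h2
  constructor <;> nlinarith

/-- Pushing the left monitoring interval towards `0`. -/
lemma monitors_push_a {g : ℝ → ℝ} {a b : ℝ} {N : ℕ} {f : ℝ → ℝ}
    (h : Monitors g a b N f) : Monitors g (a / 2) b (N + 1) f := by
  obtain ⟨ha, hb, hN, hlin0, hlin1, hIa, hIb, hf⟩ := h
  have key : ∀ s ∈ Icc (0 : ℝ) a, g^[N + 1] s = g^[N] (2 * s) := by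
    intro s hs
    rw [Function.iterate_succ_apply, hlin0 s ⟨hs.1, by linarith [hs.2]⟩]
  refine ⟨by linarith, hb, by omega, ?_, hlin1, ?_, ?_, ?_⟩
  · intro t ht
    exact hlin0 t ⟨ht.1, by linarith [ht.2]⟩
  · rw [key (a / 2) ⟨by linarith, by linarith⟩, show 2 * (a / 2) = a by ring, hIa]
  · rw [show 2 * (a / 2) = a by ring, key a ⟨by linarith, le_refl a⟩, hIb]
  · intro t ht
    rw [key (a / 2 + a / 2 * t) ⟨by nlinarith [ht.1], by nlinarith [ht.2]⟩,
      show 2 * (a / 2 + a / 2 * t) = a + a * t by ring, hf t ht]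

/-- Pushing the right monitoring interval towards `1`. -/
lemma monitors_push_b {g : ℝ → ℝ} (hm : StrictMono g) {a b : ℝ} {N : ℕ} {f : ℝ → ℝ}
    (h : Monitors g a b N f) : Monitors g a (b / 2) (N + 1) f := by
  have hrange := monitors_range hm h
  obtain ⟨ha, hb, hN, hlin0, hlin1, hIa, hIb, hf⟩ := h
  refine ⟨ha, by linarith, by omega, hlin0, ?_, ?_, ?_, ?_⟩
  · intro t ht
    exact hlin1 t ⟨by linarith [ht.1], ht.2⟩
  · rw [Function.iterate_succ_apply', hIa,
      hlin1 (1 - 2 * b) ⟨le_refl _, by linarith⟩]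
    ring
  · rw [Function.iterate_succ_apply', hIb,
      hlin1 (1 - b) ⟨by linarith, by linarith⟩]
    ring
  · intro t ht
    obtain ⟨hf0, hf1⟩ := hrange t ht
    rw [Function.iterate_succ_apply', hf t ht,
      hlin1 (1 - 2 * b + b * f t) ⟨by nlinarith, by nlinarith⟩]
    ring

lemma monitors_push_a_pow {g : ℝ → ℝ} {a b : ℝ} {N : ℕ} {f : ℝ → ℝ}
    (h : Monitors g a b N f) (k : ℕ) : Monitors g (a / 2 ^ k) b (N + k) f := by
  induction k with
  | zero => simpa using h
  | succ k ih =>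
    have := monitors_push_a ih
    rwa [div_div, ← pow_succ] at this

lemma monitors_push_b_pow {g : ℝ → ℝ} (hm : StrictMono g) {a b : ℝ} {N : ℕ} {f : ℝ → ℝ}
    (h : Monitors g a b N f) (k : ℕ) : Monitors g a (b / 2 ^ k) (N + k) f := by
  induction k with
  | zero => simpa using h
  | succ k ih =>
    have := monitors_push_b hm ih
    rwa [div_div, ← pow_succ] at this

lemma exists_div_pow_le {a δ : ℝ} (hδ : 0 < δ) :
    ∃ k : ℕ, a / 2 ^ k ≤ δ := by
  obtain ⟨k, hk⟩ := pow_unbounded_of_one_lt (a / δ) (one_lt_two (α := ℝ))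
  refine ⟨k, ?_⟩
  have h2 : (0 : ℝ) < 2 ^ k := by positivity
  rw [div_lt_iff₀ hδ] at hk
  rw [div_le_iff₀ h2]
  nlinarith

/-- Transferring monitoring data across a conjugation whose conjugator is affine near
the ends, once the monitoring intervals are deep enough inside the affine zones. -/
lemma monitors_transfer (g g₁ : Equiv.Perm ℝ) (hm : StrictMono ⇑g)
    {c d ε ε' : ℝ} (hc : 0 < c) (hd : 0 < d)
    (h0 : ∀ t ∈ Icc (0 : ℝ) ε, g₁ t = c * t)
    (h1 : ∀ t ∈ Icc (1 - ε') (1 : ℝ), g₁ t = d * (t - 1) + 1)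
    {a b : ℝ} {N : ℕ} {f : ℝ → ℝ} (hmon : Monitors (⇑g) a b N f)
    (haε : 4 * a ≤ ε) (hbε : 2 * b ≤ ε') :
    Monitors (⇑(g₁ * g * g₁⁻¹)) (c * a) (d * b) N f := by
  have hrange := monitors_range hm hmon
  obtain ⟨ha, hb, hN, hlin0, hlin1, hIa, hIb, hf⟩ := hmon
  have hinv0 : ∀ t ∈ Icc (0 : ℝ) ε, g₁⁻¹ (c * t) = t := by
    intro t ht
    rw [← h0 t ht]; exact g₁.symm_apply_apply t
  have hinv1 : ∀ t ∈ Icc (1 - ε') (1 : ℝ), g₁⁻¹ (d * (t - 1) + 1) = t := by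
    intro t ht
    rw [← h1 t ht]; exact g₁.symm_apply_apply t
  refine ⟨by positivity, by positivity, hN, ?_, ?_, ?_, ?_, ?_⟩
  · -- slope 2 on [0, 2ca]
    intro t ht
    obtain ⟨ht0, ht1⟩ := ht
    have hts : t = c * (t / c) := by field_simp
    have hs0 : 0 ≤ t / c := div_nonneg ht0 hc.le
    have hs2 : t / c ≤ 2 * a := by rw [div_le_iff₀ hc]; nlinarith
    have e1 : (g₁ * g * g₁⁻¹) t = g₁ (g (g₁⁻¹ t)) := by
      simp [Equiv.Perm.mul_apply]
    rw [e1, hts, hinv0 (t / c) ⟨hs0, by linarith⟩, hlin0 (t / c) ⟨hs0, hs2⟩,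
      show (2 : ℝ) * (t / c) = t / c + t / c by ring]
    rw [show g₁ (t / c + t / c) = g₁ (2 * (t / c)) by ring_nf,
      h0 (2 * (t / c)) ⟨by linarith, by linarith⟩]
    ring
  · -- slope 1/2 on [1 - 2db, 1]
    intro t ht
    obtain ⟨ht0, ht1⟩ := ht
    obtain ⟨s, hsdef⟩ : ∃ s : ℝ, s = 1 + (t - 1) / d := ⟨_, rfl⟩
    have hts : t = d * (s - 1) + 1 := by rw [hsdef]; field_simp; ring
    have hs1 : s ≤ 1 := by
      have : (t - 1) / d ≤ 0 := div_nonpos_of_nonpos_of_nonneg (by linarith) hd.le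
      linarith
    have hs0 : 1 - 2 * b ≤ s := by
      have : -(2 * b) ≤ (t - 1) / d := by
        rw [le_div_iff₀ hd]; nlinarith
      linarith
    have e1 : (g₁ * g * g₁⁻¹) t = g₁ (g (g₁⁻¹ t)) := by
      simp [Equiv.Perm.mul_apply]
    rw [e1, hts, hinv1 s ⟨by linarith, hs1⟩, hlin1 s ⟨hs0, hs1⟩,
      h1 ((s - 1) / 2 + 1) ⟨by linarith, by linarith⟩]
    ring
  · rw [perm_conj_iterate, hinv0 a ⟨ha.le, by linarith⟩, hIa,
      h1 (1 - 2 * b) ⟨by linarith, by linarith⟩]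
    ring
  · rw [show 2 * (c * a) = c * (2 * a) by ring, perm_conj_iterate,
      hinv0 (2 * a) ⟨by linarith, by linarith⟩, hIb,
      h1 (1 - b) ⟨by linarith, by linarith⟩]
    ring
  · intro t ht
    obtain ⟨hf0, hf1⟩ := hrange t ht
    obtain ⟨ht0, ht1⟩ := ht
    rw [show c * a + c * a * t = c * (a + a * t) by ring, perm_conj_iterate,
      hinv0 (a + a * t) ⟨by nlinarith, by nlinarith⟩, hf t ⟨ht0, ht1⟩,
      h1 (1 - 2 * b + b * f t) ⟨by nlinarith, by nlinarith⟩]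
    ring

/-- A PL homeomorphism is affine with positive slope near `0`. -/
lemma isPLHomeo_slope0 {f : ℝ → ℝ} (hf : IsPLHomeo f) :
    ∃ c ε : ℝ, 0 < c ∧ 0 < ε ∧ ∀ t ∈ Icc (0 : ℝ) ε, f t = c * t := by
  obtain ⟨-, hmono, h0, h1, -, n, x, hx, hx0, hxl, hpl⟩ := hf
  have hn : 0 < n := by
    rcases Nat.eq_zero_or_pos n with h | h
    · subst h
      have : x 0 = x (Fin.last 0) := rfl
      rw [hx0, hxl] at this
      norm_num at this
    · exact h
  obtain ⟨c, d0, hcd⟩ := hpl ⟨0, hn⟩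
  have hcs : (⟨0, hn⟩ : Fin n).castSucc = 0 := by
    apply Fin.ext; simp
  have hxc : x (⟨0, hn⟩ : Fin n).castSucc = 0 := by rw [hcs]; exact hx0
  set ε := x (⟨0, hn⟩ : Fin n).succ with hεdef
  have hε : 0 < ε := by
    rw [← hx0]
    apply hx
    simp [Fin.lt_def]
  have hd0 : d0 = 0 := by
    have := hcd 0 ⟨by rw [hxc], hε.le⟩
    rw [h0] at this
    linarith
  have hfε : f ε = c * ε + d0 := hcd ε ⟨by rw [hxc]; exact hε.le, le_refl _⟩
  have hpos : 0 < f ε := by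
    have := hmono hε
    rwa [h0] at this
  refine ⟨c, ε, by nlinarith, hε, fun t ht => ?_⟩
  rw [hcd t ⟨by rw [hxc]; exact ht.1, ht.2⟩, hd0, add_zero]

/-- A PL homeomorphism is affine with positive slope near `1`. -/
lemma isPLHomeo_slope1 {f : ℝ → ℝ} (hf : IsPLHomeo f) :
    ∃ c ε : ℝ, 0 < c ∧ 0 < ε ∧ ∀ t ∈ Icc (1 - ε) (1 : ℝ), f t = c * (t - 1) + 1 := by
  obtain ⟨-, hmono, h0, h1, -, n, x, hx, hx0, hxl, hpl⟩ := hf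
  have hn : 0 < n := by
    rcases Nat.eq_zero_or_pos n with h | h
    · subst h
      have : x 0 = x (Fin.last 0) := rfl
      rw [hx0, hxl] at this
      norm_num at this
    · exact h
  obtain ⟨c, d0, hcd⟩ := hpl ⟨n - 1, by omega⟩
  have hsucc : (⟨n - 1, by omega⟩ : Fin n).succ = Fin.last n := by
    apply Fin.ext; simp [Fin.last]; omega
  have hxs : x (⟨n - 1, by omega⟩ : Fin n).succ = 1 := by rw [hsucc]; exact hxl
  set p := x (⟨n - 1, by omega⟩ : Fin n).castSucc with hpdef
  have hp : p < 1 := by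
    rw [← hxs]
    apply hx
    simp [Fin.lt_def, Fin.last] <;> omega
  have hcd' : ∀ t ∈ Icc p (1 : ℝ), f t = c * t + d0 := by
    intro t ht
    exact hcd t ⟨ht.1, by rw [hxs]; exact ht.2⟩
  have hd0 : d0 = 1 - c := by
    have := hcd' 1 ⟨hp.le, le_refl _⟩
    rw [h1] at this
    linarith
  have hfp : f p = c * p + d0 := hcd' p ⟨le_refl _, hp.le⟩
  have hlt : f p < 1 := by
    have := hmono hp
    rwa [h1] at this
  refine ⟨c, 1 - p, by nlinarith, by linarith, fun t ht => ?_⟩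
  have h1p : (1 : ℝ) - (1 - p) = p := by ring
  rw [hcd' t ⟨by rw [← h1p]; exact ht.1, ht.2⟩, hd0]
  ring

/-- Affine local form of the inverse near `0`. -/
lemma inv_slope0 (e : Equiv.Perm ℝ) {c ε : ℝ} (hc : 0 < c)
    (h : ∀ t ∈ Icc (0 : ℝ) ε, e t = c * t) :
    ∀ t ∈ Icc (0 : ℝ) (c * ε), e⁻¹ t = c⁻¹ * t := by
  intro t ht
  have hmem : c⁻¹ * t ∈ Icc (0 : ℝ) ε := by
    constructor
    · exact mul_nonneg (by positivity) ht.1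
    · have h2 : c * (c⁻¹ * t) ≤ c * ε := by
        rw [show c * (c⁻¹ * t) = t by field_simp]
        exact ht.2
      exact le_of_mul_le_mul_left h2 hc
  have he : e (c⁻¹ * t) = t := by
    rw [h _ hmem]; field_simp
  conv_lhs => rw [← he]
  exact e.symm_apply_apply _

/-- Affine local form of the inverse near `1`. -/
lemma inv_slope1 (e : Equiv.Perm ℝ) {d ε' : ℝ} (hd : 0 < d)
    (h : ∀ t ∈ Icc (1 - ε') (1 : ℝ), e t = d * (t - 1) + 1) :
    ∀ t ∈ Icc (1 - d * ε') (1 : ℝ), e⁻¹ t = d⁻¹ * (t - 1) + 1 := by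
  intro t ht
  have hmem : d⁻¹ * (t - 1) + 1 ∈ Icc (1 - ε') (1 : ℝ) := by
    constructor
    · have h2 : d * (-ε') ≤ d * (d⁻¹ * (t - 1)) := by
        rw [show d * (d⁻¹ * (t - 1)) = t - 1 by field_simp]
        nlinarith [ht.1]
      have := le_of_mul_le_mul_left h2 hd
      linarith
    · have : d⁻¹ * (t - 1) ≤ 0 :=
        mul_nonpos_of_nonneg_of_nonpos (by positivity) (by linarith [ht.2])
      linarith
  have he : e (d⁻¹ * (t - 1) + 1) = t := by
    rw [h _ hmem]
    field_simp
    ring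
  conv_lhs => rw [← he]
  exact e.symm_apply_apply _

/-- The set of monitored informations is a class invariant:
`𝓘(g₁ g g₁⁻¹) = 𝓘(g)`. -/
theorem monitored_informations_class_invariant
    (g g₁ : Equiv.Perm ℝ) (hg : IsPLHomeo g) (hg₁ : IsPLHomeo g₁)
    (hgx : ∀ x ∈ Ioo (0 : ℝ) 1, x < g x)
    (hg0 : Slope0 g 2) (hg1 : Slope1 g (1 / 2)) :
    ∀ f : ℝ → ℝ,
      (∃ a b : ℝ, ∃ N : ℕ, Monitors (⇑(g₁ * g * g₁⁻¹)) a b N f) ↔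
      (∃ a b : ℝ, ∃ N : ℕ, Monitors (⇑g) a b N f) := by
  intro f
  have hmg : StrictMono ⇑g := hg.2.1
  have hmg₁ : StrictMono ⇑g₁ := hg₁.2.1
  have hminv : StrictMono ⇑g₁⁻¹ := perm_symm_strictMono g₁ hmg₁
  have hmh : StrictMono ⇑(g₁ * g * g₁⁻¹) := by
    intro x y hxy
    simp only [Equiv.Perm.mul_apply]
    exact hmg₁ (hmg (hminv hxy))
  obtain ⟨c, ε, hc, hε, h0⟩ := isPLHomeo_slope0 hg₁
  obtain ⟨d, ε', hd, hε', h1⟩ := isPLHomeo_slope1 hg₁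
  constructor
  · rintro ⟨a, b, N, hm⟩
    have h0' := inv_slope0 g₁ hc h0
    have h1' := inv_slope1 g₁ hd h1
    obtain ⟨k₁, hk₁⟩ := exists_div_pow_le (a := a) (show (0 : ℝ) < c * ε / 4 by positivity)
    obtain ⟨k₂, hk₂⟩ := exists_div_pow_le (a := b) (show (0 : ℝ) < d * ε' / 2 by positivity)
    have hm2 := monitors_push_b_pow hmh (monitors_push_a_pow hm k₁) k₂
    have hT := monitors_transfer (g₁ * g * g₁⁻¹) g₁⁻¹ hmh
      (inv_pos.2 hc) (inv_pos.2 hd) h0' h1' hm2 (by linarith) (by linarith)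
    rw [show g₁⁻¹ * (g₁ * g * g₁⁻¹) * g₁⁻¹⁻¹ = g by group] at hT
    exact ⟨_, _, _, hT⟩
  · rintro ⟨a, b, N, hm⟩
    obtain ⟨k₁, hk₁⟩ := exists_div_pow_le (a := a) (show (0 : ℝ) < ε / 4 by positivity)
    obtain ⟨k₂, hk₂⟩ := exists_div_pow_le (a := b) (show (0 : ℝ) < ε' / 2 by positivity)
    have hm2 := monitors_push_b_pow hmg (monitors_push_a_pow hm k₁) k₂
    exact ⟨_, _, _, monitors_transfer g g₁ hmg hc hd h0 h1 hm2
      (by linarith) (by linarith)⟩
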